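/- For every permutation π ∈ S_n, aix φ(π) = pix π and des φ(π) = lec π. -/

import Mathlib

namespace PaperStats

/-- `des w` is the number of descents of the word `w` (0-indexed positions `i`
with `w(i) > w(i+1)`). -/
def des (w : List ℕ) : ℕ :=
  ((Finset.range (w.length - 1)).filter fun i => w.getD (i + 1) 0 < w.getD i 0).card

/-- `inv w` is the number of inversions of the word `w`: pairs of positions
`i < j` with `w(i) > w(j)`. -/
def inv (w : List ℕ) : ℕ :=
  ((Finset.range w.length ×ˢ Finset.range w.length).filter
    fun p => p.1 < p.2 ∧ w.getD p.2 0 < w.getD p.1 0).card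

/-- An inversion `(i,j)` of `w` is admissible if either `w(j) < w(j+1)`
(`j` is not the last position and is followed by an ascent), or there is a
position `k` strictly between `i` and `j` with `w(j) > w(k)`. -/
def IsAdmissible (w : List ℕ) (i j : ℕ) : Prop :=
  (j + 1 < w.length ∧ w.getD j 0 < w.getD (j + 1) 0) ∨
    ∃ k, i < k ∧ k < j ∧ w.getD k 0 < w.getD j 0

instance (w : List ℕ) (i j : ℕ) : Decidable (IsAdmissible w i j) :=
  decidable_of_iff ((j + 1 < w.length ∧ w.getD j 0 < w.getD (j + 1) 0) ∨
      ∃ k ∈ Finset.Ioo i j, w.getD k 0 < w.getD j 0) (by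
    unfold IsAdmissible
    simp only [Finset.mem_Ioo, and_assoc])

/-- `ai w` is the number of admissible inversions of `w`. -/
def ai (w : List ℕ) : ℕ :=
  ((Finset.range w.length ×ˢ Finset.range w.length).filter
    fun p => p.1 < p.2 ∧ w.getD p.2 0 < w.getD p.1 0 ∧ IsAdmissible w p.1 p.2).card

/-- `aid w = ai w + des w`. -/
def aid (w : List ℕ) : ℕ := ai w + des w

/-- The statistic `aix`, defined recursively: `aix ∅ = 0`; writing a nonempty
word as `π = α m β`, where `m` is the smallest letter and `α` is the maximal
prefix not containing `m`, one has `aix π = 1 + aix β` if `α = ∅`,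
`aix π = 0` if `β = ∅` (and `α ≠ ∅`), and `aix π = aix α` otherwise. -/
def aix : List ℕ → ℕ
  | [] => 0
  | x :: xs =>
    if (x :: xs).takeWhile (fun a => decide (a ≠ xs.foldr min x)) = [] then
      1 + aix (((x :: xs).dropWhile (fun a => decide (a ≠ xs.foldr min x))).tail)
    else if ((x :: xs).dropWhile (fun a => decide (a ≠ xs.foldr min x))).tail = [] then 0
    else aix ((x :: xs).takeWhile (fun a => decide (a ≠ xs.foldr min x)))
termination_by w => w.length
decreasing_by
  · have h1 := (List.dropWhile_sublist (l := x :: xs) (fun a => decide (a ≠ xs.foldr min x))).length_le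
    have h2 := List.length_tail (l := (x :: xs).dropWhile (fun a => decide (a ≠ xs.foldr min x)))
    simp only [List.length_cons, List.foldr_attach] at *
    omega
  · rename_i hα hβ
    simp only [List.foldr_attach] at *
    have h0 : ((x :: xs).takeWhile (fun a => decide (a ≠ xs.foldr min x))) ++
        ((x :: xs).dropWhile (fun a => decide (a ≠ xs.foldr min x))) = x :: xs :=
      List.takeWhile_append_dropWhile ..
    have h1 : ((x :: xs).dropWhile (fun a => decide (a ≠ xs.foldr min x))) ≠ [] := by
      intro h
      apply hβ
      rw [h]
      rfl
    have h2 := congrArg List.length h0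
    simp only [List.length_append, List.length_cons] at h2
    have h3 : 0 < ((x :: xs).dropWhile (fun a => decide (a ≠ xs.foldr min x))).length :=
      List.length_pos_iff.mpr h1
    simp only [List.length_cons]
    omega

/-- The map `f(k,τ)`: with `m` the smallest letter of `τ` together with `k`
(`k` not occurring in `τ`), and `τ = α m β` with `α` the maximal prefix of `τ`
avoiding `m`: `f(k,∅) = k`; `f(k,τ) = kτ` if `k = m`; and for `k > m`,
`f(k,τ) = f(k,β) m` if `α = ∅`, `f(k,τ) = k m α` if `β = ∅`, and
`f(k,τ) = f(k,α) m β` otherwise. -/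
def fkt (k : ℕ) : List ℕ → List ℕ
  | [] => [k]
  | x :: xs =>
    if k < xs.foldr min x then k :: x :: xs
    else if (x :: xs).takeWhile (fun a => decide (a ≠ xs.foldr min x)) = [] then
      fkt k (((x :: xs).dropWhile (fun a => decide (a ≠ xs.foldr min x))).tail) ++
        [xs.foldr min x]
    else if ((x :: xs).dropWhile (fun a => decide (a ≠ xs.foldr min x))).tail = [] then
      k :: xs.foldr min x :: ((x :: xs).takeWhile (fun a => decide (a ≠ xs.foldr min x)))
    else
      fkt k ((x :: xs).takeWhile (fun a => decide (a ≠ xs.foldr min x))) ++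
        xs.foldr min x :: ((x :: xs).dropWhile (fun a => decide (a ≠ xs.foldr min x))).tail
termination_by w => w.length
decreasing_by
  · have h1 := (List.dropWhile_sublist (l := x :: xs) (fun a => decide (a ≠ xs.foldr min x))).length_le
    have h2 := List.length_tail (l := (x :: xs).dropWhile (fun a => decide (a ≠ xs.foldr min x)))
    simp only [List.length_cons, List.foldr_attach] at *
    omega
  · rename_i hk hα hβ
    simp only [List.foldr_attach] at *
    have h0 : ((x :: xs).takeWhile (fun a => decide (a ≠ xs.foldr min x))) ++
        ((x :: xs).dropWhile (fun a => decide (a ≠ xs.foldr min x))) = x :: xs :=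
      List.takeWhile_append_dropWhile ..
    have h1 : ((x :: xs).dropWhile (fun a => decide (a ≠ xs.foldr min x))) ≠ [] := by
      intro h
      apply hβ
      rw [h]
      rfl
    have h2 := congrArg List.length h0
    simp only [List.length_append, List.length_cons] at h2
    have h3 : 0 < ((x :: xs).dropWhile (fun a => decide (a ≠ xs.foldr min x))).length :=
      List.length_pos_iff.mpr h1
    simp only [List.length_cons]
    omega

/-- `ini w` is the first letter of `w`. -/
def ini (w : List ℕ) : ℕ := w.headD 0

/-- The word of a permutation `π ∈ S_n`, namely `π(1) π(2) … π(n)`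
(with values in `{1, …, n}`). -/
def permList {n : ℕ} (π : Equiv.Perm (Fin n)) : List ℕ :=
  List.ofFn fun i => (π i : ℕ) + 1

/-- The bijection `φ`: `φ(π) = f(π(1), f(π(2), ⋯ f(π(n), ∅) ⋯ ))`. -/
def phiW (w : List ℕ) : List ℕ := w.foldr fkt []

/-- Helper: `decRun l` splits `l` into its maximal weakly decreasing prefix
and the rest. -/
def decRun : List ℕ → List ℕ × List ℕ
  | [] => ([], [])
  | [x] => ([x], [])
  | x :: y :: rest =>
    if y ≤ x then ((x :: (decRun (y :: rest)).1), (decRun (y :: rest)).2)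
    else ([x], y :: rest)

theorem decRun_append : ∀ l : List ℕ, (decRun l).1 ++ (decRun l).2 = l
  | [] => rfl
  | [x] => rfl
  | x :: y :: rest => by
    rw [decRun]
    split
    · simpa using decRun_append (y :: rest)
    · rfl

/-- Helper computing the hook factorization of a word from its reversal: the
rightmost hook of the word starts at its rightmost descent top, i.e. it is
obtained by extending the maximal weakly decreasing prefix of the reversed word
by one more letter; the process is repeated on what remains, and when no
letters usable for a hook remain the word left over is the increasing part
`π₀`. The result is `(π₀, [π₁, …, π_k])`. -/
def hookRev (r : List ℕ) : List ℕ × List (List ℕ) :=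
  match h : (decRun r).2 with
  | [] => (r.reverse, [])
  | z :: rest =>
    ((hookRev rest).1, (hookRev rest).2 ++ [z :: (decRun r).1.reverse])
termination_by r.length
decreasing_by
  have h2 := congrArg List.length (decRun_append r)
  rw [h] at h2
  simp only [List.length_append, List.length_cons] at h2
  omega

/-- The hook factorization `(π₀, [π₁, …, π_k])` of a word
`w = π₀ π₁ ⋯ π_k`, where `π₀` is increasing and each `π_i`, `i ≥ 1`, is a
hook. -/
def hookSplit (w : List ℕ) : List ℕ × List (List ℕ) := hookRev w.reverse

/-- `pix w` is the length of the initial increasing factor `π₀` in the hook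
factorization of `w`. -/
def pix (w : List ℕ) : ℕ := (hookSplit w).1.length

/-- `lec w` is the sum of the numbers of inversions of the hooks in the hook
factorization of `w`. -/
def lec (w : List ℕ) : ℕ := ((hookSplit w).2.map inv).sum

/-- A word `w(1) … w(r)` with `r ≥ 2` is a hook if
`w(1) > w(2) ≤ w(3) ≤ ⋯ ≤ w(r)`. -/
def IsHook (w : List ℕ) : Prop :=
  ∃ a b rest, w = a :: b :: rest ∧ b < a ∧ List.Chain' (· ≤ ·) (b :: rest)

/-- `w(i)` is a left-to-right maximum of `w` if `w(k) < w(i)` for all `k < i`. -/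
def IsLRMax (w : List ℕ) (i : ℕ) : Prop := ∀ k < i, w.getD k 0 < w.getD i 0

instance (w : List ℕ) (i : ℕ) : Decidable (IsLRMax w i) := by
  unfold IsLRMax; infer_instance

/-- `mix w` counts the pairs of positions `i < j` such that either
`w(i) > w(j)` and `w(i)` is a left-to-right maximum, or `w(i) < w(j)` and
there is `k < i` with `w(k) > w(j)`. -/
def mix (w : List ℕ) : ℕ :=
  ((Finset.range w.length ×ˢ Finset.range w.length).filter fun p =>
    p.1 < p.2 ∧ ((w.getD p.2 0 < w.getD p.1 0 ∧ IsLRMax w p.1) ∨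
      (w.getD p.1 0 < w.getD p.2 0 ∧ ∃ k ∈ Finset.range p.1, w.getD p.2 0 < w.getD k 0))).card

/-- `das w` counts the positions `i` such that either `w(i) > w(i+1)` and
`w(i)` is a left-to-right maximum, or `w(i) < w(i+1)` and there is `k < i`
with `w(k) > w(i+1)`. -/
def das (w : List ℕ) : ℕ :=
  ((Finset.range (w.length - 1)).filter fun i =>
    (w.getD (i + 1) 0 < w.getD i 0 ∧ IsLRMax w i) ∨
      (w.getD i 0 < w.getD (i + 1) 0 ∧ ∃ k ∈ Finset.range i, w.getD (i + 1) 0 < w.getD k 0)).card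

/-- The values of the left-to-right maxima of a word, listed in increasing
order (which is also their order of occurrence). -/
def lrMaxima : List ℕ → List ℕ
  | [] => []
  | x :: xs => x :: lrMaxima (xs.filter fun a => decide (x < a))
termination_by l => l.length
decreasing_by
  have := xs.length_filter_le (fun a => decide (x < a))
  simp only [List.length_cons, List.length_unattach]
  exact Nat.lt_succ_of_le ((List.length_filter_le _ _).trans (by simp))

/-- `Bset w m` is the list of entries of `w` that are smaller than `m` and lie
to the right of (the first occurrence of) `m` in `w`. -/
def Bset (w : List ℕ) (m : ℕ) : List ℕ :=
  ((w.dropWhile fun a => decide (a ≠ m)).tail).filter fun a => decide (a < m)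

/-- Helper for `psiS`: replace the letters satisfying `P`, in order, by the
letters of the first list. -/
def replaceSub (P : ℕ → Bool) : List ℕ → List ℕ → List ℕ
  | _, [] => []
  | rs, x :: xs =>
    if P x then rs.headD x :: replaceSub P rs.tail xs else x :: replaceSub P rs xs

/-- `psiS S w` is `ψ_S(w)`: the result of reversing, in place, the subword of
`w` consisting of the entries belonging to `S`. -/
def psiS (S : List ℕ) (w : List ℕ) : List ℕ :=
  replaceSub (fun a => decide (a ∈ S)) ((w.filter fun a => decide (a ∈ S)).reverse) w

/-- Helper applying the alternating composition
`ψ_{B₁} ∘ ψ_{B₂ ∩ B₁} ∘ ψ_{B₂} ∘ ⋯ ∘ ψ_{B_{k-1}} ∘ ψ_{B_k ∩ B_{k-1}} ∘ ψ_{B_k}`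
to `w`, given the list `[B_k, B_{k-1}, …, B₁]`. -/
def psiChain : List (List ℕ) → List ℕ → List ℕ
  | [], w => w
  | [B], w => psiS B w
  | B :: B' :: rest, w => psiChain (B' :: rest) (psiS (B.inter B') (psiS B w))

/-- The Brändén–Claesson bijection `ψ`. -/
def psi (w : List ℕ) : List ℕ :=
  psiChain (((lrMaxima w).map (Bset w)).reverse) w

/-!
Prepending a letter `k` to `w` changes the hook factorization in one of two ways: if `k` is
smaller than the first letter of `π₀`, it extends `π₀`; otherwise `k π₀` becomes a new hook, so
`π₀` becomes empty and `lec` grows by `inv (k π₀) = #{a ∈ π₀ | a < k}`.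

On the other side, the recursion defining `aix τ` runs through a word `aixWord τ` of `aix τ`
letters, and `f(k, ·)` acts on it exactly as prepending `k` acts on `π₀`: under the same
condition `k` is prepended to it, otherwise it becomes empty; and each letter `m < k` of
`aixWord τ` is moved by `f` behind a larger letter, creating one new descent. Both facts are
proved by induction along the factorization `τ = α m β`, and by induction on `w` they give
`aixWord (φ w) = π₀` and `des (φ w) = lec w`.
-/

section List

variable {α : Type*}

theorem length_tail_dropWhile_lt {p : α → Bool} {x : α} {xs : List α} :
    ((x :: xs).dropWhile p).tail.length < (x :: xs).length := by
  have := (List.dropWhile_sublist (l := x :: xs) p).length_le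
  simp only [List.length_tail, List.length_cons] at *
  omega

theorem length_takeWhile_lt {p : α → Bool} {l : List α} (h : (l.dropWhile p).tail ≠ []) :
    (l.takeWhile p).length < l.length := by
  have := congrArg List.length (List.takeWhile_append_dropWhile (p := p) (l := l))
  have : (l.dropWhile p).length ≠ 0 := by
    rintro h0; simp [List.length_eq_zero_iff.1 h0] at h
  simp only [List.length_append] at *
  omega

theorem takeWhile_dropWhile_ne_of_not_mem [DecidableEq α] {m : α} {u v : List α} (hu : m ∉ u) :
    (u ++ m :: v).takeWhile (fun a => decide (a ≠ m)) = u ∧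
      (u ++ m :: v).dropWhile (fun a => decide (a ≠ m)) = m :: v := by
  have hu' : ∀ a ∈ u, decide (a ≠ m) = true := by
    intro a ha; simp only [ne_eq, decide_eq_true_eq]; rintro rfl; exact hu ha
  rw [List.takeWhile_append_of_pos hu', List.dropWhile_append_of_pos hu']
  simp

theorem le_foldr_min_iff [LinearOrder α] {b x : α} {xs : List α} :
    b ≤ xs.foldr min x ↔ ∀ a ∈ x :: xs, b ≤ a := by
  induction xs with
  | nil => simp
  | cons y ys ih => simp only [List.foldr_cons, le_min_iff, ih, List.forall_mem_cons]; tauto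

theorem foldr_min_eq [LinearOrder α] {x m : α} {xs : List α} (hm : m ∈ x :: xs)
    (hle : ∀ a ∈ x :: xs, m ≤ a) : xs.foldr min x = m :=
  le_antisymm (le_foldr_min_iff.1 le_rfl m hm) (le_foldr_min_iff.2 hle)

theorem le_headD_of_forall_le [Preorder α] {k : α} {l : List α} (h : ∀ a ∈ l, k ≤ a) :
    k ≤ l.headD k := by
  cases l <;> simp_all

theorem headD_le_of_pairwise [Preorder α] {k a : α} {l : List α} (h : l.Pairwise (· ≤ ·))
    (ha : a ∈ l) : l.headD k ≤ a := by
  rcases l with _ | ⟨b, l⟩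
  · simp at ha
  rcases List.mem_cons.1 ha with rfl | ha
  exacts [le_rfl, List.rel_of_pairwise_cons h ha]

end List

/-- The letters counted by `aix`: the recursion of `aix`, recording `m` where `aix` adds one. -/
def aixWord : List ℕ → List ℕ
  | [] => []
  | x :: xs =>
    if (x :: xs).takeWhile (fun a => decide (a ≠ xs.foldr min x)) = [] then
      xs.foldr min x :: aixWord ((x :: xs).dropWhile (fun a => decide (a ≠ xs.foldr min x))).tail
    else if ((x :: xs).dropWhile (fun a => decide (a ≠ xs.foldr min x))).tail = [] then []
    else aixWord ((x :: xs).takeWhile (fun a => decide (a ≠ xs.foldr min x)))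
termination_by w => w.length
decreasing_by
  · exact length_tail_dropWhile_lt
  · exact length_takeWhile_lt ‹_›

/-- `u ++ m :: v` is the factorization `α m β` of the paper: `m` is the smallest letter and
`u` the maximal prefix avoiding it. -/
def IsMinSplit (u : List ℕ) (m : ℕ) (v : List ℕ) : Prop :=
  (∀ a ∈ u, m < a) ∧ ∀ a ∈ v, m ≤ a

namespace IsMinSplit

variable {u v : List ℕ} {m : ℕ}

theorem min_le (h : IsMinSplit u m v) : ∀ a ∈ u ++ m :: v, m ≤ a := by
  intro a ha
  rcases List.mem_append.1 ha with ha | ha | ⟨_, ha⟩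
  exacts [(h.1 a ha).le, le_rfl, h.2 a ha]

theorem lt_of_nodup (h : IsMinSplit u m v) (hnd : (u ++ m :: v).Nodup) : ∀ a ∈ v, m < a := by
  have hm : m ∉ v := (List.nodup_cons.1 (hnd.sublist (List.sublist_append_right u _))).1
  exact fun a ha => lt_of_le_of_ne (h.2 a ha) (by rintro rfl; exact hm ha)

theorem foldr_min_takeWhile_dropWhile (h : IsMinSplit u m v) {x : ℕ} {xs : List ℕ}
    (hx : u ++ m :: v = x :: xs) :
    xs.foldr min x = m ∧ (x :: xs).takeWhile (fun a => decide (a ≠ m)) = u ∧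
      (x :: xs).dropWhile (fun a => decide (a ≠ m)) = m :: v := by
  rw [← hx]
  exact ⟨foldr_min_eq (hx ▸ List.mem_append_cons_self) (hx ▸ h.min_le),
    takeWhile_dropWhile_ne_of_not_mem fun hm => (h.1 m hm).false⟩

end IsMinSplit

theorem isMinSplit_nil_left {m : ℕ} {v : List ℕ} (hv : ∀ a ∈ v, m ≤ a) : IsMinSplit [] m v :=
  ⟨by simp, hv⟩

theorem isMinSplit_nil_right {m : ℕ} {u : List ℕ} (hu : ∀ a ∈ u, m < a) : IsMinSplit u m [] :=
  ⟨hu, by simp⟩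

theorem exists_isMinSplit {l : List ℕ} (hl : l ≠ []) :
    ∃ u m v, l = u ++ m :: v ∧ IsMinSplit u m v := by
  obtain ⟨hmem, hle⟩ := (List.min_eq_iff hl).1 rfl
  generalize l.min hl = m at hmem hle
  obtain ⟨u, v, rfl, hu⟩ := List.eq_append_cons_of_mem hmem
  refine ⟨u, m, v, rfl, fun a ha => ?_, fun a ha => hle a (by simp [ha])⟩
  exact lt_of_le_of_ne (hle a (by simp [ha])) (by rintro rfl; exact hu ha)

@[elab_as_elim]
theorem minSplit_induction {P : List ℕ → Prop} (nil : P [])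
    (split : ∀ u m v, IsMinSplit u m v → P u → P v → P (u ++ m :: v)) (l : List ℕ) : P l := by
  induction hn : l.length using Nat.strong_induction_on generalizing l with
  | _ n ih =>
  rcases eq_or_ne l [] with rfl | hl
  · exact nil
  obtain ⟨u, m, v, rfl, h⟩ := exists_isMinSplit hl
  simp only [List.length_append, List.length_cons] at hn
  exact split u m v h (ih _ (by omega) u rfl) (ih _ (by omega) v rfl)

@[simp] theorem des_nil : des [] = 0 := rfl

@[simp] theorem des_singleton (x : ℕ) : des [x] = 0 := rfl

theorem des_cons (x : ℕ) (l : List ℕ) :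
    des (x :: l) = (if l.headD x < x then 1 else 0) + des l := by
  rcases l with _ | ⟨y, r⟩
  · simp
  simp only [des, Finset.card_filter, List.length_cons, Nat.add_sub_cancel]
  rw [Finset.sum_range_succ', add_comm]
  simp

section MinSplit

variable {u v : List ℕ} {m : ℕ}

theorem aix_append_cons (h : IsMinSplit u m v) :
    aix (u ++ m :: v) = if u = [] then 1 + aix v else if v = [] then 0 else aix u := by
  rcases hx : u ++ m :: v with _ | ⟨x, xs⟩
  · simp at hx
  obtain ⟨hm, hα, hβ⟩ := h.foldr_min_takeWhile_dropWhile hx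
  rw [aix, hm, hα, hβ, List.tail_cons]

theorem aixWord_append_cons (h : IsMinSplit u m v) :
    aixWord (u ++ m :: v) =
      if u = [] then m :: aixWord v else if v = [] then [] else aixWord u := by
  rcases hx : u ++ m :: v with _ | ⟨x, xs⟩
  · simp at hx
  obtain ⟨hm, hα, hβ⟩ := h.foldr_min_takeWhile_dropWhile hx
  rw [aixWord, hm, hα, hβ, List.tail_cons]

theorem fkt_append_cons (k : ℕ) (h : IsMinSplit u m v) :
    fkt k (u ++ m :: v) = if k < m then k :: (u ++ m :: v) else if u = [] then fkt k v ++ [m]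
      else if v = [] then k :: m :: u else fkt k u ++ m :: v := by
  rcases hx : u ++ m :: v with _ | ⟨x, xs⟩
  · simp at hx
  obtain ⟨hm, hα, hβ⟩ := h.foldr_min_takeWhile_dropWhile hx
  rw [fkt, hm, hα, hβ, List.tail_cons]

theorem des_append_cons (h : IsMinSplit u m v) :
    des (u ++ m :: v) = des u + des v + if u = [] then 0 else 1 := by
  induction u with
  | nil =>
    rw [List.nil_append, des_cons, if_neg (not_lt.2 (le_headD_of_forall_le h.2))]
    simp
  | cons a u ih =>
    have hma : m < a := h.1 a (by simp)
    rw [List.cons_append, des_cons, ih ⟨fun b hb => h.1 b (by simp [hb]), h.2⟩, des_cons]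
    rcases u with _ | ⟨b, u⟩
    · simp [hma, add_comm]
    · simp [add_assoc]

end MinSplit

theorem aix_eq_length_aixWord (l : List ℕ) : aix l = (aixWord l).length := by
  induction l using minSplit_induction with
  | nil => simp [aix, aixWord]
  | split u m v h ihu ihv =>
    rw [aix_append_cons h, aixWord_append_cons h]
    split_ifs <;> simp [ihu, ihv, add_comm]

theorem aixWord_subset (l : List ℕ) : aixWord l ⊆ l := by
  induction l using minSplit_induction with
  | nil => simp [aixWord]
  | split u m v h ihu ihv =>
    rw [aixWord_append_cons h]
    split_ifs
    · exact List.Subset.trans (List.cons_subset_cons m ihv) (by simp)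
    · simp
    · exact List.Subset.trans ihu (List.subset_append_left _ _)

theorem aixWord_cons_of_forall_le {k : ℕ} {l : List ℕ} (h : ∀ a ∈ l, k ≤ a) :
    aixWord (k :: l) = k :: aixWord l := by
  simpa using aixWord_append_cons (isMinSplit_nil_left h)

theorem fkt_perm (k : ℕ) (τ : List ℕ) : (fkt k τ).Perm (k :: τ) := by
  induction τ using minSplit_induction with
  | nil => simp [fkt]
  | split u m v h ihu ihv =>
    rw [fkt_append_cons k h]
    split_ifs with hkm hu hv
    · rfl
    · subst hu
      exact (List.perm_append_singleton m _).trans ((ihv.cons m).trans (List.Perm.swap k m v))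
    · subst hv
      exact (List.perm_append_singleton m u).symm.cons k
    · exact ihu.append_right (m :: v)

theorem fkt_ne_nil (k : ℕ) (τ : List ℕ) : fkt k τ ≠ [] :=
  List.ne_nil_of_length_pos (by simp [(fkt_perm k τ).length_eq])

theorem lt_of_mem_fkt {k m : ℕ} {τ : List ℕ} (hτ : ∀ a ∈ τ, m < a) (hk : m < k) :
    ∀ a ∈ fkt k τ, m < a := by
  intro a ha
  rcases List.mem_cons.1 ((fkt_perm k τ).subset ha) with rfl | ha
  exacts [hk, hτ a ha]

theorem aixWord_fkt {k : ℕ} {τ : List ℕ} (hnd : (k :: τ).Nodup) :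
    aixWord (fkt k τ) = if k ≤ (aixWord τ).headD k then k :: aixWord τ else [] := by
  induction τ using minSplit_induction with
  | nil => simp [fkt, aixWord_cons_of_forall_le, aixWord]
  | split u m v h ihu ihv =>
    have hkm : k ≠ m := fun hkm => (List.nodup_cons.1 hnd).1 (by simp [hkm])
    have hv := h.lt_of_nodup (List.nodup_cons.1 hnd).2
    rw [fkt_append_cons k h]
    rcases lt_or_gt_of_ne hkm with hkm | hmk
    · have hk : ∀ a ∈ u ++ m :: v, k ≤ a := fun a ha => hkm.le.trans (h.min_le a ha)
      rw [if_pos hkm, aixWord_cons_of_forall_le hk,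
        if_pos (le_headD_of_forall_le fun a ha => hk a (aixWord_subset _ ha))]
    rw [if_neg (not_lt.2 hmk.le), aixWord_append_cons h]
    rcases eq_or_ne u [] with rfl | hu
    · rw [if_pos rfl, if_pos rfl,
        aixWord_append_cons (isMinSplit_nil_right (lt_of_mem_fkt hv hmk)),
        if_neg (fkt_ne_nil k v), if_pos rfl]
      simp [hmk]
    rw [if_neg hu, if_neg hu]
    rcases eq_or_ne v [] with rfl | hv'
    · have := aixWord_append_cons (u := [k]) (m := m) (v := u)
        ⟨by simpa using hmk, fun a ha => (h.1 a ha).le⟩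
      simpa [hu, aixWord_cons_of_forall_le, aixWord] using this
    rw [if_neg hv', if_neg hv', aixWord_append_cons ⟨lt_of_mem_fkt h.1 hmk, h.2⟩,
      if_neg (fkt_ne_nil k u), if_neg hv']
    exact ihu (hnd.sublist (by simp))

theorem des_fkt {k : ℕ} {τ : List ℕ} (hnd : (k :: τ).Nodup) :
    des (fkt k τ) = des τ + (aixWord τ).countP (· < k) := by
  induction τ using minSplit_induction with
  | nil => simp [fkt, aixWord]
  | split u m v h ihu ihv =>
    have hkm : k ≠ m := fun hkm => (List.nodup_cons.1 hnd).1 (by simp [hkm])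
    have hv := h.lt_of_nodup (List.nodup_cons.1 hnd).2
    rw [fkt_append_cons k h]
    rcases lt_or_gt_of_ne hkm with hkm | hmk
    · have hk : ∀ a ∈ u ++ m :: v, k ≤ a := fun a ha => hkm.le.trans (h.min_le a ha)
      have hcount : (aixWord (u ++ m :: v)).countP (· < k) = 0 :=
        List.countP_eq_zero.2 fun a ha => by simpa using hk a (aixWord_subset _ ha)
      rw [if_pos hkm, des_cons, if_neg (not_lt.2 (le_headD_of_forall_le hk)), hcount]
      simp
    rw [if_neg (not_lt.2 hmk.le), aixWord_append_cons h, des_append_cons h]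
    rcases eq_or_ne u [] with rfl | hu
    · rw [if_pos rfl, if_pos rfl, if_pos rfl,
        des_append_cons (isMinSplit_nil_right (lt_of_mem_fkt hv hmk)), if_neg (fkt_ne_nil k v),
        ihv (hnd.sublist (by simp)), List.countP_cons]
      simp only [des_nil, add_zero, hmk, decide_true, if_true]
      omega
    rw [if_neg hu, if_neg hu, if_neg hu]
    rcases eq_or_ne v [] with rfl | hv'
    · have := des_append_cons (u := [k]) (m := m) (v := u)
        ⟨by simpa using hmk, fun a ha => (h.1 a ha).le⟩
      simpa using this
    rw [if_neg hv', if_neg hv', des_append_cons ⟨lt_of_mem_fkt h.1 hmk, h.2⟩,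
      if_neg (fkt_ne_nil k u), ihu (hnd.sublist (by simp))]
    omega

theorem countP_eq_sum_range (p : ℕ → Bool) (l : List ℕ) :
    l.countP p = ∑ j ∈ Finset.range l.length, if p (l.getD j 0) then 1 else 0 := by
  induction l with
  | nil => rfl
  | cons x xs ih =>
    rw [List.countP_cons, List.length_cons, Finset.sum_range_succ']
    simp [ih]

theorem inv_cons (x : ℕ) (l : List ℕ) : inv (x :: l) = l.countP (· < x) + inv l := by
  simp only [inv, Finset.card_filter, Finset.sum_product, List.length_cons]
  rw [Finset.sum_range_succ', add_comm]
  simp [Finset.sum_range_succ' _ l.length, countP_eq_sum_range]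

theorem inv_eq_zero_of_pairwise {l : List ℕ} (h : l.Pairwise (· ≤ ·)) : inv l = 0 := by
  induction l with
  | nil => rfl
  | cons x l ih =>
    obtain ⟨hx, hl⟩ := List.pairwise_cons.1 h
    rw [inv_cons, ih hl, List.countP_eq_zero.2 fun a ha => by simpa using hx a ha]

theorem decRun_eq_of_isChain {d : List ℕ} (hd : d ≠ []) (hchain : d.IsChain (· ≥ ·)) {s : List ℕ}
    (hs : ∀ z ∈ s.head?, d.getLast hd < z) : decRun (d ++ s) = (d, s) := by
  induction d with
  | nil => exact absurd rfl hd
  | cons x d ih =>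
    rcases d with _ | ⟨y, d⟩
    · rcases s with _ | ⟨z, s⟩
      · rfl
      · rw [List.singleton_append, decRun, if_neg (not_le.2 (by simpa using hs z rfl))]
    · rw [List.cons_append, List.cons_append, decRun,
        if_pos (List.isChain_cons_cons.1 hchain).1, ← List.cons_append,
        ih (List.cons_ne_nil _ _) (List.isChain_cons_cons.1 hchain).2 hs]

theorem hookRev_of_decRun_snd_eq_nil {r : List ℕ} (h : (decRun r).2 = []) :
    hookRev r = (r.reverse, []) := by
  rw [hookRev]
  split
  · rfl
  · simp_all

theorem hookRev_of_decRun_snd_eq_cons {r rest : List ℕ} {z : ℕ} (h : (decRun r).2 = z :: rest) :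
    hookRev r = ((hookRev rest).1, (hookRev rest).2 ++ [z :: (decRun r).1.reverse]) := by
  rw [hookRev]
  split
  · simp_all
  · next heq => rw [h, List.cons.injEq] at heq; obtain ⟨rfl, rfl⟩ := heq; rfl

def IsHookFactorization (w : List ℕ) (f : List ℕ × List (List ℕ)) : Prop :=
  w = f.1 ++ f.2.flatten ∧ f.1.IsChain (· ≤ ·) ∧ ∀ h ∈ f.2, IsHook h

theorem hookSplit_eq_of_isHookFactorization {w : List ℕ} {f : List ℕ × List (List ℕ)}
    (hf : IsHookFactorization w f) : hookSplit w = f := by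
  obtain ⟨p, hs⟩ := f
  obtain ⟨rfl, hp, hhooks⟩ := hf
  dsimp only at hp hhooks ⊢
  induction hs using List.reverseRecOn with
  | nil =>
    have hd : decRun p.reverse = (p.reverse, []) := by
      rcases eq_or_ne p [] with rfl | hne
      · rfl
      simpa using decRun_eq_of_isChain (s := []) (List.reverse_ne_nil_iff.2 hne)
        (List.isChain_reverse.2 hp) (by simp)
    simp [hookSplit, hookRev_of_decRun_snd_eq_nil (by rw [hd])]
  | append_singleton hs h ih =>
    obtain ⟨a, b, c, rfl, hba, hc⟩ := hhooks h (by simp)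
    have hd : decRun ((p ++ (hs ++ [a :: b :: c]).flatten).reverse) =
        ((b :: c).reverse, a :: (p ++ hs.flatten).reverse) := by
      simpa using decRun_eq_of_isChain (s := a :: (p ++ hs.flatten).reverse)
        (List.reverse_ne_nil_iff.2 (List.cons_ne_nil b c)) (List.isChain_reverse.2 hc)
        (by simpa using hba)
    have ih' : hookRev (p ++ hs.flatten).reverse = (p, hs) :=
      ih fun h' hh' => hhooks h' (by simp [hh'])
    rw [hookSplit, hookRev_of_decRun_snd_eq_cons (by rw [hd]), hd, ih']
    simp

def hookCons (k : ℕ) (f : List ℕ × List (List ℕ)) : List ℕ × List (List ℕ) :=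
  if k ≤ f.1.headD k then (k :: f.1, f.2) else ([], (k :: f.1) :: f.2)

theorem IsHookFactorization.hookCons {w : List ℕ} {f : List ℕ × List (List ℕ)}
    (hf : IsHookFactorization w f) (k : ℕ) : IsHookFactorization (k :: w) (hookCons k f) := by
  obtain ⟨p, hs⟩ := f
  obtain ⟨rfl, hp, hhooks⟩ := hf
  dsimp only at hp hhooks
  unfold PaperStats.hookCons
  split_ifs with hk
  · refine ⟨rfl, List.isChain_cons.2 ⟨fun y hy => ?_, hp⟩, hhooks⟩
    obtain ⟨c, rfl⟩ := List.head?_eq_some_iff.1 hy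
    exact hk
  · obtain ⟨b, c, rfl⟩ := List.exists_cons_of_ne_nil (l := p) (by rintro rfl; exact hk le_rfl)
    refine ⟨by simp, List.isChain_nil, fun h hh => ?_⟩
    rcases List.mem_cons.1 hh with rfl | hh
    exacts [⟨k, b, c, rfl, not_le.1 hk, hp⟩, hhooks h hh]

theorem hookSplit_nil : hookSplit [] = ([], []) :=
  hookSplit_eq_of_isHookFactorization ⟨rfl, List.isChain_nil, by simp⟩

theorem isHookFactorization_hookSplit (w : List ℕ) : IsHookFactorization w (hookSplit w) := by
  induction w with
  | nil => rw [hookSplit_nil]; exact ⟨rfl, List.isChain_nil, by simp⟩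
  | cons k w ih =>
    rw [hookSplit_eq_of_isHookFactorization (ih.hookCons k)]
    exact ih.hookCons k

theorem hookSplit_cons (k : ℕ) (w : List ℕ) : hookSplit (k :: w) = hookCons k (hookSplit w) :=
  hookSplit_eq_of_isHookFactorization ((isHookFactorization_hookSplit w).hookCons k)

theorem fst_hookSplit_cons (k : ℕ) (w : List ℕ) :
    (hookSplit (k :: w)).1 =
      if k ≤ (hookSplit w).1.headD k then k :: (hookSplit w).1 else [] := by
  rw [hookSplit_cons, hookCons]
  split_ifs <;> rfl

theorem lec_cons (k : ℕ) (w : List ℕ) :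
    lec (k :: w) = lec w + (hookSplit w).1.countP (· < k) := by
  have hp := List.isChain_iff_pairwise.1 (isHookFactorization_hookSplit w).2.1
  rw [lec, lec, hookSplit_cons, hookCons]
  split_ifs with hk
  · rw [List.countP_eq_zero.2 fun a ha => by simpa using hk.trans (headD_le_of_pairwise hp ha)]
    rfl
  · simp [inv_cons, inv_eq_zero_of_pairwise hp, add_comm]

theorem phiW_perm (w : List ℕ) : (phiW w).Perm w := by
  induction w with
  | nil => rfl
  | cons k w ih => exact (fkt_perm k _).trans (ih.cons k)

theorem aixWord_phiW {w : List ℕ} (hw : w.Nodup) : aixWord (phiW w) = (hookSplit w).1 := by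
  induction w with
  | nil => simp [phiW, aixWord, hookSplit_nil]
  | cons k w ih =>
    have hnd : (k :: phiW w).Nodup := ((phiW_perm w).cons k).nodup_iff.2 hw
    rw [phiW, List.foldr_cons, ← phiW, aixWord_fkt hnd, ih hw.of_cons, fst_hookSplit_cons]

theorem des_phiW {w : List ℕ} (hw : w.Nodup) : des (phiW w) = lec w := by
  induction w with
  | nil => simp [phiW, lec, hookSplit_nil]
  | cons k w ih =>
    have hnd : (k :: phiW w).Nodup := ((phiW_perm w).cons k).nodup_iff.2 hw
    rw [phiW, List.foldr_cons, ← phiW, des_fkt hnd, ih hw.of_cons, aixWord_phiW hw.of_cons,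
      lec_cons]

theorem nodup_permList {n : ℕ} (π : Equiv.Perm (Fin n)) : (permList π).Nodup :=
  List.nodup_ofFn.2 fun i j h => π.injective (Fin.ext (by simpa using h))

/-- For every permutation `π ∈ S_n`, `aix φ(π) = pix π` and
`des φ(π) = lec π`. -/
theorem aix_des_phi (n : ℕ) (π : Equiv.Perm (Fin n)) :
    aix (phiW (permList π)) = pix (permList π) ∧
    des (phiW (permList π)) = lec (permList π) :=
  ⟨by rw [aix_eq_length_aixWord, aixWord_phiW (nodup_permList π), pix],
    des_phiW (nodup_permList π)⟩

end PaperStats
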